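/- arXiv:2511.03881 — 3 statements merged into one kernel-verified Lean document; each statement's English description precedes it below -/
import Mathlib

section
/- For all real parameters c > 0 and α > 0, the measure σ^H_{c,α} is a probability measure: σ^H_{c,α}(ℝ) = 1. -/
open MeasureTheory Real

/-- Left endpoint `t₋ = (α(c−1) − 2√(αc))/(α+1)` of the support of the continuous part of
the limiting transition measure for the skew Howe ensemble. -/
noncomputable def tMinus (c α : ℝ) : ℝ := (α * (c - 1) - 2 * Real.sqrt (α * c)) / (α + 1)

/-- Right endpoint `t₊ = (α(c−1) + 2√(αc))/(α+1)`. -/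
noncomputable def tPlus (c α : ℝ) : ℝ := (α * (c - 1) + 2 * Real.sqrt (α * c)) / (α + 1)

/-- The limiting transition measure `σ^H_{c,α}` of random Young diagrams under the skew Howe
measure: atoms of mass `max(0, (αc−1)/(α(c+1)))` at `−1` and `max(0, (α−c)/(α(c+1)))` at `c`,
plus the absolutely continuous part with density
`((1+α)/(2πα))·√((x−t₋)(t₊−x))/((c−x)(x+1))` on `(t₋, t₊)`. -/
noncomputable def sigmaH (c α : ℝ) : Measure ℝ :=
  ENNReal.ofReal (max 0 ((α * c - 1) / (α * (c + 1)))) • Measure.dirac (-1)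
    + ENNReal.ofReal (max 0 ((α - c) / (α * (c + 1)))) • Measure.dirac c
    + volume.withDensity (fun x =>
        if x ∈ Set.Ioo (tMinus c α) (tPlus c α) then
          ENNReal.ofReal ((1 + α) / (2 * π * α) *
            Real.sqrt ((x - tMinus c α) * (tPlus c α - x)) / ((c - x) * (x + 1)))
        else 0)

noncomputable def vf (a b d x : ℝ) : ℝ :=
  (a + b - 2*d)/(b - a) + 2*((d - a)*(b - d))/((b - a)*(x - d))

lemma vf_left_end {a b d : ℝ} (hab : a < b) (hda : d ≠ a) : vf a b d a = -1 := by
  have h1 : b - a ≠ 0 := by intro h; nlinarith [sub_eq_zero.mp h]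
  have h2 : a - d ≠ 0 := sub_ne_zero.mpr (Ne.symm hda)
  unfold vf; field_simp; ring

lemma vf_right_end {a b d : ℝ} (hab : a < b) (hdb : d ≠ b) : vf a b d b = 1 := by
  have h1 : b - a ≠ 0 := by intro h; nlinarith [sub_eq_zero.mp h]
  have h2 : b - d ≠ 0 := sub_ne_zero.mpr (Ne.symm hdb)
  unfold vf; field_simp; ring

lemma continuousOn_arcsin_vf {a b d : ℝ} (hab : a < b) (h : ∀ x ∈ Set.Icc a b, x - d ≠ 0) :
    ContinuousOn (fun y => Real.arcsin (vf a b d y)) (Set.Icc a b) := by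
  apply Real.continuous_arcsin.comp_continuousOn
  unfold vf
  apply ContinuousOn.add continuousOn_const
  apply ContinuousOn.div continuousOn_const
  · exact continuousOn_const.mul (continuousOn_id.sub continuousOn_const)
  · intro x hx
    exact mul_ne_zero (by intro hh; nlinarith [sub_eq_zero.mp hh]) (h x hx)

lemma hasDerivAt_arcsin_vf_left {a b d D : ℝ} (hd : d < a) (hab : a < b)
    (hD : 0 ≤ D) (hD2 : D^2 = (a - d)*(b - d)) {x : ℝ} (hx : x ∈ Set.Ioo a b) :
    HasDerivAt (fun y => Real.arcsin (vf a b d y))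
      (D / ((x - d) * Real.sqrt ((x - a)*(b - x)))) x := by
  obtain ⟨hax, hxb⟩ := hx
  have hxd : 0 < x - d := by linarith
  have hba : 0 < b - a := by linarith
  have hN : 0 < (x - a)*(b - x) := by nlinarith
  have hsN : 0 < Real.sqrt ((x - a)*(b - x)) := Real.sqrt_pos.mpr hN
  have hDpos : 0 < D := by
    rcases hD.lt_or_eq with h | h
    · exact h
    · exfalso; nlinarith [hD2]
  have h1 : HasDerivAt (fun y : ℝ => y - d) 1 x := (hasDerivAt_id x).sub_const d
  have h2 := h1.inv (ne_of_gt hxd)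
  have h3 := (h2.const_mul (2*((d - a)*(b - d))/(b - a))).const_add ((a + b - 2*d)/(b - a))
  have hfun : vf a b d
      = fun y => (a + b - 2*d)/(b - a) + (2*((d - a)*(b - d))/(b - a)) * (y - d)⁻¹ := by
    funext y; unfold vf; rw [div_mul_eq_div_div]; ring
  have hv : HasDerivAt (vf a b d) (2*D^2/((b - a)*(x - d)^2)) x := by
    rw [show (2:ℝ)*D^2/((b - a)*(x - d)^2)
        = 2*((d - a)*(b - d))/(b - a) * (-1/(x - d)^2) by rw [hD2]; field_simp; ring]
    rw [hfun]
    exact h3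
  have hkey : 1 - vf a b d x ^ 2 = (2*D/((b - a)*(x - d)))^2 * ((x - a)*(b - x)) := by
    rw [show ((2:ℝ)*D/((b - a)*(x - d)))^2 = 4*((a-d)*(b-d))/((b - a)*(x - d))^2 by
      rw [div_pow, mul_pow, hD2]; ring]
    unfold vf
    field_simp
    ring
  have hpos : 0 < 1 - vf a b d x ^ 2 := by
    rw [hkey]; positivity
  have hne1 : vf a b d x ≠ 1 := by intro h; rw [h] at hpos; norm_num at hpos
  have hne2 : vf a b d x ≠ -1 := by intro h; rw [h] at hpos; norm_num at hpos
  have harc := (Real.hasDerivAt_arcsin hne2 hne1).comp x hv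
  refine harc.congr_deriv ?_
  have hsq : Real.sqrt (1 - vf a b d x ^ 2)
      = 2*D/((b - a)*(x - d)) * Real.sqrt ((x - a)*(b - x)) := by
    rw [hkey, Real.sqrt_mul (sq_nonneg _), Real.sqrt_sq (by positivity)]
  rw [hsq]
  field_simp

lemma hasDerivAt_arcsin_vf_right {a b d D : ℝ} (hd : b < d) (hab : a < b)
    (hD : 0 ≤ D) (hD2 : D^2 = (d - a)*(d - b)) {x : ℝ} (hx : x ∈ Set.Ioo a b) :
    HasDerivAt (fun y => Real.arcsin (vf a b d y))
      (D / ((d - x) * Real.sqrt ((x - a)*(b - x)))) x := by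
  obtain ⟨hax, hxb⟩ := hx
  have hxd : 0 < d - x := by linarith
  have hxd' : x - d ≠ 0 := by intro h; nlinarith [sub_eq_zero.mp h]
  have hba : 0 < b - a := by linarith
  have hN : 0 < (x - a)*(b - x) := by nlinarith
  have hsN : 0 < Real.sqrt ((x - a)*(b - x)) := Real.sqrt_pos.mpr hN
  have hDpos : 0 < D := by
    rcases hD.lt_or_eq with h | h
    · exact h
    · exfalso; nlinarith [hD2]
  have h1 : HasDerivAt (fun y : ℝ => y - d) 1 x := (hasDerivAt_id x).sub_const d
  have h2 := h1.inv hxd'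
  have h3 := (h2.const_mul (2*((d - a)*(b - d))/(b - a))).const_add ((a + b - 2*d)/(b - a))
  have hfun : vf a b d
      = fun y => (a + b - 2*d)/(b - a) + (2*((d - a)*(b - d))/(b - a)) * (y - d)⁻¹ := by
    funext y; unfold vf; rw [div_mul_eq_div_div]; ring
  have hv : HasDerivAt (vf a b d) (2*D^2/((b - a)*(x - d)^2)) x := by
    rw [show (2:ℝ)*D^2/((b - a)*(x - d)^2)
        = 2*((d - a)*(b - d))/(b - a) * (-1/(x - d)^2) by rw [hD2]; field_simp; ring]
    rw [hfun]
    exact h3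
  have hkey : 1 - vf a b d x ^ 2 = (2*D/((b - a)*(d - x)))^2 * ((x - a)*(b - x)) := by
    rw [show ((2:ℝ)*D/((b - a)*(d - x)))^2 = 4*((a-d)*(b-d))/((b - a)*(x - d))^2 by
      rw [div_pow, mul_pow, hD2]; ring]
    unfold vf
    field_simp
    ring
  have hpos : 0 < 1 - vf a b d x ^ 2 := by
    rw [hkey]; positivity
  have hne1 : vf a b d x ≠ 1 := by intro h; rw [h] at hpos; norm_num at hpos
  have hne2 : vf a b d x ≠ -1 := by intro h; rw [h] at hpos; norm_num at hpos
  have harc := (Real.hasDerivAt_arcsin hne2 hne1).comp x hv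
  refine harc.congr_deriv ?_
  have hsq : Real.sqrt (1 - vf a b d x ^ 2)
      = 2*D/((b - a)*(d - x)) * Real.sqrt ((x - a)*(b - x)) := by
    rw [hkey, Real.sqrt_mul (sq_nonneg _), Real.sqrt_sq (by positivity)]
  rw [hsq]
  field_simp
  ring

lemma hasDerivAt_arcsin_u {a b : ℝ} (hab : a < b) {x : ℝ} (hx : x ∈ Set.Ioo a b) :
    HasDerivAt (fun y => Real.arcsin ((2*y - a - b)/(b - a)))
      (1 / Real.sqrt ((x - a)*(b - x))) x := by
  obtain ⟨hax, hxb⟩ := hx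
  have hba : 0 < b - a := by linarith
  have hN : 0 < (x - a)*(b - x) := by nlinarith
  have hsN : 0 < Real.sqrt ((x - a)*(b - x)) := Real.sqrt_pos.mpr hN
  have hu : HasDerivAt (fun y : ℝ => (2*y - a - b)/(b - a)) (2/(b - a)) x := by
    simpa using ((((hasDerivAt_id x).const_mul 2).sub_const a).sub_const b).div_const (b - a)
  have hkey : 1 - ((2*x - a - b)/(b - a)) ^ 2 = (2/(b - a))^2 * ((x - a)*(b - x)) := by
    field_simp
    ring
  have hpos : 0 < 1 - ((2*x - a - b)/(b - a)) ^ 2 := by rw [hkey]; positivity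
  have hne1 : (2*x - a - b)/(b - a) ≠ 1 := by intro h; rw [h] at hpos; norm_num at hpos
  have hne2 : (2*x - a - b)/(b - a) ≠ -1 := by intro h; rw [h] at hpos; norm_num at hpos
  have harc := (Real.hasDerivAt_arcsin hne2 hne1).comp x hu
  refine harc.congr_deriv ?_
  have hsq : Real.sqrt (1 - ((2*x - a - b)/(b - a)) ^ 2)
      = 2/(b - a) * Real.sqrt ((x - a)*(b - x)) := by
    rw [hkey, Real.sqrt_mul (sq_nonneg _), Real.sqrt_sq (by positivity)]
  rw [hsq]
  field_simp

lemma pack_left {a b D : ℝ} (d : ℝ) (hab : a < b) (hd : d ≤ a) (hD : 0 ≤ D)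
    (hdeg : d = a → D = 0) (hD2 : D^2 = (a - d)*(b - d)) :
    (∀ x ∈ Set.Ioo a b, HasDerivAt (fun y => D * Real.arcsin (vf a b d y))
        (D^2 / ((x - d) * Real.sqrt ((x - a)*(b - x)))) x)
    ∧ ContinuousOn (fun y => D * Real.arcsin (vf a b d y)) (Set.Icc a b)
    ∧ D * Real.arcsin (vf a b d b) - D * Real.arcsin (vf a b d a) = D * π := by
  rcases hd.lt_or_eq with h | h
  · refine ⟨fun x hx => ?_, ?_, ?_⟩
    · have := (hasDerivAt_arcsin_vf_left h hab hD hD2 hx).const_mul D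
      rw [sq, mul_div_assoc]
      exact this
    · exact continuousOn_const.mul (continuousOn_arcsin_vf hab
        (fun x hx => by have := hx.1; intro hh; nlinarith [sub_eq_zero.mp hh]))
    · rw [vf_left_end hab h.ne, vf_right_end hab (by linarith : d ≠ b) ]
      rw [Real.arcsin_one, Real.arcsin_neg_one]; ring
  · have hD0 : D = 0 := hdeg h
    refine ⟨fun x hx => ?_, ?_, ?_⟩
    · simpa [hD0] using hasDerivAt_const x (0:ℝ)
    · simp only [hD0, zero_mul]; exact continuousOn_const
    · simp [hD0]

lemma pack_right {a b D : ℝ} (d : ℝ) (hab : a < b) (hd : b ≤ d) (hD : 0 ≤ D)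
    (hdeg : d = b → D = 0) (hD2 : D^2 = (d - a)*(d - b)) :
    (∀ x ∈ Set.Ioo a b, HasDerivAt (fun y => D * Real.arcsin (vf a b d y))
        (D^2 / ((d - x) * Real.sqrt ((x - a)*(b - x)))) x)
    ∧ ContinuousOn (fun y => D * Real.arcsin (vf a b d y)) (Set.Icc a b)
    ∧ D * Real.arcsin (vf a b d b) - D * Real.arcsin (vf a b d a) = D * π := by
  rcases hd.lt_or_eq with h | h
  · refine ⟨fun x hx => ?_, ?_, ?_⟩
    · have := (hasDerivAt_arcsin_vf_right h hab hD hD2 hx).const_mul D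
      rw [sq, mul_div_assoc]
      exact this
    · exact continuousOn_const.mul (continuousOn_arcsin_vf hab
        (fun x hx => by have := hx.2; intro hh; nlinarith [sub_eq_zero.mp hh]))
    · rw [vf_left_end hab (by linarith : d ≠ a), vf_right_end hab (h.ne') ]
      rw [Real.arcsin_one, Real.arcsin_neg_one]; ring
  · have hD0 : D = 0 := hdeg h.symm
    refine ⟨fun x hx => ?_, ?_, ?_⟩
    · simpa [hD0] using hasDerivAt_const x (0:ℝ)
    · simp only [hD0, zero_mul]; exact continuousOn_const
    · simp [hD0]

set_option maxHeartbeats 1000000 in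
/-- The transition measure `σ^H_{c,α}` is a probability measure. -/
theorem sigmaH_univ (c α : ℝ) (hc : 0 < c) (hα : 0 < α) :
    sigmaH c α Set.univ = 1 := by
  have hπ := Real.pi_pos
  set a := tMinus c α with ha
  set b := tPlus c α with hb
  set s := Real.sqrt (α * c) with hsdef
  have hs0 : 0 < s := Real.sqrt_pos.mpr (by positivity)
  have hs2 : s^2 = α*c := Real.sq_sqrt (by positivity)
  have hα1 : (0:ℝ) < α + 1 := by linarith
  have hαc : 0 < α*c := mul_pos hα hc
  have hc1 : (0:ℝ) < c + 1 := by linarith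
  have hba : b - a = 4*s/(α+1) := by
    rw [ha, hb]; unfold tMinus tPlus; rw [← hsdef]; field_simp; ring
  have hab : a < b := by
    have : 0 < b - a := by rw [hba]; exact div_pos (by linarith) hα1
    linarith
  have hA1 : a + 1 = (s-1)^2/(α+1) := by
    rw [ha]; unfold tMinus; rw [← hsdef]; field_simp; linear_combination -hs2
  have hB1 : b + 1 = (s+1)^2/(α+1) := by
    rw [hb]; unfold tPlus; rw [← hsdef]; field_simp; linear_combination -hs2
  have hCB : c - b = (α + c - 2*s)/(α+1) := by
    rw [hb]; unfold tPlus; rw [← hsdef]; field_simp; ring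
  have hCA : c - a = (α + c + 2*s)/(α+1) := by
    rw [ha]; unfold tMinus; rw [← hsdef]; field_simp; ring
  have hs_amgm : 2*s ≤ α + c := by nlinarith [sq_nonneg (α - c), sq_nonneg (α + c - 2*s)]
  have ha1 : (-1:ℝ) ≤ a := by
    have : 0 ≤ a + 1 := by rw [hA1]; positivity
    linarith
  have hbc : b ≤ c := by
    have : 0 ≤ c - b := by rw [hCB]; exact div_nonneg (by linarith) hα1.le
    linarith
  set D₁ := |α*c - 1|/(α+1) with hD₁
  set D₂ := |α - c|/(α+1) with hD₂
  have hD₁nn : 0 ≤ D₁ := by positivity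
  have hD₂nn : 0 ≤ D₂ := by positivity
  have hD₁sq : D₁^2 = (a - (-1))*(b - (-1)) := by
    have h9 : (a - (-1))*(b - (-1)) = (a+1)*(b+1) := by ring
    have h8 : (s-1)^2*(s+1)^2 = (α*c-1)^2 := by linear_combination (s^2 + α*c - 2) * hs2
    rw [h9, hA1, hB1, hD₁, div_pow, sq_abs, div_mul_div_comm, ← h8]
    ring
  have hD₂sq : D₂^2 = (c - a)*(c - b) := by
    have h8 : (α+c+2*s)*(α+c-2*s) = (α-c)^2 := by linear_combination -4*hs2
    rw [hCA, hCB, hD₂, div_pow, sq_abs, div_mul_div_comm, ← h8]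
    ring
  have hdeg₁ : (-1:ℝ) = a → D₁ = 0 := by
    intro h
    have h1 : (s-1)^2/(α+1) = 0 := by rw [← hA1, ← h]; ring
    have h3 : s = 1 := by field_simp at h1; nlinarith
    have h4 : α*c = 1 := by rw [← hs2, h3]; norm_num
    rw [hD₁, h4]; simp
  have hdeg₂ : c = b → D₂ = 0 := by
    intro h
    have h1 : (α + c - 2*s)/(α+1) = 0 := by rw [← hCB, h]; ring
    have h2 : α + c - 2*s = 0 := by field_simp at h1; linarith
    have h5 : (α - c)^2 = 0 := by linear_combination (α + c + 2*s)*h2 + 4*hs2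
    have h6 : α = c := by
      have h7 : α - c = 0 := by
        have := sq_eq_zero_iff.mp h5
        exact this
      linarith
    rw [hD₂, h6]; simp
  obtain ⟨hg1d, hg1c, hg1e⟩ := pack_left (-1 : ℝ) hab ha1 hD₁nn hdeg₁ hD₁sq
  obtain ⟨hg2d, hg2c, hg2e⟩ := pack_right c hab hbc hD₂nn hdeg₂ hD₂sq
  obtain ⟨K, hK⟩ : ∃ K : ℝ, K = (1 + α) / (2 * π * α) := ⟨_, rfl⟩
  have hK0 : 0 < K := by rw [hK]; positivity
  set F : ℝ → ℝ := fun x => K * (Real.arcsin ((2*x - a - b)/(b - a))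
      - (D₁ * Real.arcsin (vf a b (-1) x) + D₂ * Real.arcsin (vf a b c x))/(c+1)) with hF
  set f : ℝ → ℝ := fun x => K * Real.sqrt ((x - a) * (b - x)) / ((c - x) * (x + 1)) with hf
  -- pointwise derivative
  have hder : ∀ x ∈ Set.Ioo a b, HasDerivAt F (f x) x := by
    intro x hx
    obtain ⟨hax, hxb⟩ := hx
    have hx1 : 0 < x + 1 := by linarith
    have hcx : 0 < c - x := by linarith
    have hN : 0 < (x - a)*(b - x) := by nlinarith
    have hsN : 0 < Real.sqrt ((x - a)*(b - x)) := Real.sqrt_pos.mpr hN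
    have hSS : Real.sqrt ((x - a)*(b - x)) * Real.sqrt ((x - a)*(b - x)) = (x - a)*(b - x) :=
      Real.mul_self_sqrt hN.le
    have h0 := ((hasDerivAt_arcsin_u hab ⟨hax, hxb⟩).sub
      (((hg1d x ⟨hax, hxb⟩).add (hg2d x ⟨hax, hxb⟩)).div_const (c+1))).const_mul K
    have hmain : 1/Real.sqrt ((x - a)*(b - x))
        - (D₁^2/((x - (-1))*Real.sqrt ((x - a)*(b - x)))
           + D₂^2/((c - x)*Real.sqrt ((x - a)*(b - x))))/(c+1)
        = Real.sqrt ((x - a)*(b - x))/((c - x)*(x + 1)) := by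
      rw [hD₁sq, hD₂sq]
      set S := Real.sqrt ((x - a)*(b - x)) with hS
      simp only [sub_neg_eq_add]
      have hS1 : S ≠ 0 := hsN.ne'
      have step1 : 1/S - ((a + 1)*(b + 1)/((x+1)*S) + (c-a)*(c-b)/((c-x)*S))/(c+1)
          = ((c+1)*(x+1)*(c-x) - (a + 1)*(b + 1)*(c-x) - (c-a)*(c-b)*(x+1))
            / ((c+1)*(x+1)*(c-x)*S) := by
        field_simp
        ring
      have step2 : (c+1)*(x+1)*(c-x) - (a + 1)*(b + 1)*(c-x) - (c-a)*(c-b)*(x+1)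
          = (c+1)*(S*S) := by rw [hSS]; ring
      have step3 : ((c+1)*(S*S))/((c+1)*(x+1)*(c-x)*S) = S/((c-x)*(x+1)) := by
        field_simp
      calc 1/S - ((a + 1)*(b + 1)/((x+1)*S) + (c-a)*(c-b)/((c-x)*S))/(c+1)
          = ((c+1)*(x+1)*(c-x) - (a + 1)*(b + 1)*(c-x) - (c-a)*(c-b)*(x+1))
            / ((c+1)*(x+1)*(c-x)*S) := step1
        _ = ((c+1)*(S*S))/((c+1)*(x+1)*(c-x)*S) := by rw [step2]
        _ = S/((c-x)*(x+1)) := step3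
    have : f x = K * (1/Real.sqrt ((x - a)*(b - x))
        - (D₁^2/((x - (-1))*Real.sqrt ((x - a)*(b - x)))
           + D₂^2/((c - x)*Real.sqrt ((x - a)*(b - x))))/(c+1)) := by
      rw [hmain, hf]; ring
    rw [this]
    exact h0
  -- continuity of F on [a,b]
  have hcontU : ContinuousOn (fun y => Real.arcsin ((2*y - a - b)/(b - a))) (Set.Icc a b) := by
    exact (Real.continuous_arcsin.comp
      ((((continuous_const.mul continuous_id).sub continuous_const).sub continuous_const).div_const
        (b - a))).continuousOn
  have hcont : ContinuousOn F (Set.Icc a b) := by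
    rw [hF]
    exact continuousOn_const.mul (hcontU.sub ((hg1c.add hg2c).div_const (c+1)))
  have hnn : ∀ x ∈ Set.Ioo a b, 0 ≤ f x := by
    intro x hx
    rw [hf]
    exact div_nonneg (mul_nonneg hK0.le (Real.sqrt_nonneg _))
      (mul_nonneg (by linarith [hx.2]) (by linarith [hx.1]))
  have hIntIoc : IntegrableOn f (Set.Ioc a b) :=
    intervalIntegral.integrableOn_deriv_of_nonneg hcont hder hnn
  have hII : IntervalIntegrable f volume a b :=
    (intervalIntegrable_iff_integrableOn_Ioc_of_le hab.le).mpr hIntIoc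
  have hFTC : ∫ y in a..b, f y = F b - F a :=
    intervalIntegral.integral_eq_sub_of_hasDeriv_right_of_le hab.le hcont
      (fun x hx => (hder x hx).hasDerivWithinAt) hII
  -- value of F b - F a
  have hub : (2*b - a - b)/(b - a) = 1 := by
    rw [show 2*b - a - b = b - a by ring]
    exact div_self (by linarith)
  have hua : (2*a - a - b)/(b - a) = -1 := by
    rw [show 2*a - a - b = -(b - a) by ring, neg_div]
    rw [div_self (by linarith : b - a ≠ 0)]
  have hFba : F b - F a = K * (π - (D₁*π + D₂*π)/(c+1)) := by
    have h1 : F b - F a = K * ((Real.arcsin ((2*b - a - b)/(b-a))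
        - Real.arcsin ((2*a - a - b)/(b-a)))
        - ((D₁ * Real.arcsin (vf a b (-1) b) - D₁ * Real.arcsin (vf a b (-1) a))
          + (D₂ * Real.arcsin (vf a b c b) - D₂ * Real.arcsin (vf a b c a)))/(c+1)) := by
      rw [hF]; ring
    rw [h1, hub, hua, Real.arcsin_one, Real.arcsin_neg_one, hg1e, hg2e]
    ring
  -- measure computation
  rw [sigmaH, Measure.add_apply, Measure.add_apply, Measure.smul_apply, Measure.smul_apply,
    withDensity_apply _ MeasurableSet.univ, Measure.restrict_univ, ← ha, ← hb]
  simp only [Measure.dirac_apply_of_mem (Set.mem_univ _), smul_eq_mul, mul_one]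
  have hifeq : (fun x => if x ∈ Set.Ioo a b then
        ENNReal.ofReal ((1 + α) / (2 * π * α) * Real.sqrt ((x - a) * (b - x)) / ((c - x) * (x + 1)))
      else 0) = (Set.Ioo a b).indicator (fun x => ENNReal.ofReal (f x)) := by
    funext x
    rw [Set.indicator_apply, hf, ← hK]
  rw [hifeq, lintegral_indicator measurableSet_Ioo _]
  have hIntIoo : IntegrableOn f (Set.Ioo a b) := hIntIoc.mono_set Set.Ioo_subset_Ioc_self
  have hnn_ae : 0 ≤ᵐ[volume.restrict (Set.Ioo a b)] f :=
    (ae_restrict_iff' measurableSet_Ioo).mpr (ae_of_all _ hnn)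
  rw [← ofReal_integral_eq_lintegral_ofReal hIntIoo hnn_ae]
  have hiv : ∫ x in Set.Ioo a b, f x = F b - F a := by
    rw [← MeasureTheory.integral_Ioc_eq_integral_Ioo, ← intervalIntegral.integral_of_le hab.le,
      hFTC]
  rw [hiv, hFba]
  -- final arithmetic
  have habs1 : |α*c - 1| ≤ α*c + 1 := abs_le.mpr ⟨by linarith, by linarith⟩
  have habs2 : |α - c| ≤ α + c := abs_le.mpr ⟨by linarith, by linarith⟩
  have hm1 : 0 ≤ max 0 ((α * c - 1) / (α * (c + 1))) := le_max_left _ _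
  have hm2 : 0 ≤ max 0 ((α - c) / (α * (c + 1))) := le_max_left _ _
  have hm3 : 0 ≤ K * (π - (D₁*π + D₂*π)/(c+1)) := by
    apply mul_nonneg hK0.le
    rw [hD₁, hD₂, sub_nonneg, div_le_iff₀ hc1]
    have e1 : |α*c - 1|/(α+1)*π + |α - c|/(α+1)*π = (|α*c - 1| + |α - c|)*π/(α+1) := by ring
    rw [e1, div_le_iff₀ hα1]
    nlinarith
  rw [← ENNReal.ofReal_add hm1 hm2, ← ENNReal.ofReal_add (add_nonneg hm1 hm2) hm3,
    ← ENNReal.ofReal_one]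
  congr 1
  rw [hK, hD₁, hD₂]
  have hπ' : π ≠ 0 := Real.pi_ne_zero
  rcases le_total (α*c) 1 with h1 | h1 <;> rcases le_total α c with h2 | h2
  · rw [max_eq_left (div_nonpos_of_nonpos_of_nonneg (by linarith) (by positivity)),
      max_eq_left (div_nonpos_of_nonpos_of_nonneg (by linarith) (by positivity)),
      abs_of_nonpos (by linarith : α*c - 1 ≤ 0), abs_of_nonpos (by linarith : α - c ≤ 0)]
    field_simp
    ring
  · rw [max_eq_left (div_nonpos_of_nonpos_of_nonneg (by linarith) (by positivity)),
      max_eq_right (div_nonneg (by linarith) (by positivity)),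
      abs_of_nonpos (by linarith : α*c - 1 ≤ 0), abs_of_nonneg (by linarith : 0 ≤ α - c)]
    field_simp
    ring
  · rw [max_eq_right (div_nonneg (by linarith) (by positivity)),
      max_eq_left (div_nonpos_of_nonpos_of_nonneg (by linarith) (by positivity)),
      abs_of_nonneg (by linarith : 0 ≤ α*c - 1), abs_of_nonpos (by linarith : α - c ≤ 0)]
    field_simp
    ring
  · rw [max_eq_right (div_nonneg (by linarith) (by positivity)),
      max_eq_right (div_nonneg (by linarith) (by positivity)),
      abs_of_nonneg (by linarith : 0 ≤ α*c - 1), abs_of_nonneg (by linarith : 0 ≤ α - c)]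
    field_simp
    ring
end

section
/- Let c_α, c_β > 0 with c_α + c_β > 1, and set c = c_β/c_α and α = 1/(c_α + c_β − 1). Then the pushforward of the measure σ^H_{c,α} under the affine map x ↦ (x+1)/(1+c) equals the Wachter measure σ^{JUE}_{c_α,c_β}. In particular the limiting transition measure of random Young diagrams under the skew Howe measure coincides, after affine rescaling of (−1,c) to (0,1), with the limiting eigenvalue distribution of the Jacobi Unitary Ensemble. -/
open MeasureTheory Real
open scoped ENNReal

/-- Left endpoint `λ₋` of the Wachter law. -/
noncomputable def lamMinus (ca cb : ℝ) : ℝ :=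
  (ca * (ca + cb - 1) + cb - 2 * Real.sqrt (ca * cb * (ca + cb - 1))) / (ca + cb) ^ 2

/-- Right endpoint `λ₊` of the Wachter law. -/
noncomputable def lamPlus (ca cb : ℝ) : ℝ :=
  (ca * (ca + cb - 1) + cb + 2 * Real.sqrt (ca * cb * (ca + cb - 1))) / (ca + cb) ^ 2

/-- The Wachter (Jacobi/MANOVA) limiting measure `σ^{JUE}_{c_α,c_β}`. -/
noncomputable def sigmaJUE (ca cb : ℝ) : Measure ℝ :=
  ENNReal.ofReal (max 0 (1 - ca)) • Measure.dirac 0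
    + ENNReal.ofReal (max 0 (1 - cb)) • Measure.dirac 1
    + volume.withDensity (fun x =>
        if x ∈ Set.Ioo (lamMinus ca cb) (lamPlus ca cb) then
          ENNReal.ofReal ((ca + cb) *
            Real.sqrt ((lamPlus ca cb - x) * (x - lamMinus ca cb)) / (2 * π * x * (1 - x)))
        else 0)


private lemma map_equiv_withDensity (e : ℝ ≃ᵐ ℝ) (g : ℝ → ℝ≥0∞) (hg : Measurable g)
    (μ : Measure ℝ) :
    (μ.withDensity g).map e = (μ.map e).withDensity (fun y => g (e.symm y)) := by
  ext s hs
  rw [Measure.map_apply e.measurable hs, withDensity_apply _ (e.measurable hs),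
    withDensity_apply _ hs]
  have h := MeasureTheory.setLIntegral_map (μ := μ) hs (hg.comp e.symm.measurable) e.measurable
  simp only [Function.comp_apply, MeasurableEquiv.symm_apply_apply] at h
  exact h.symm

private noncomputable def affineEquiv (a b : ℝ) (ha : a ≠ 0) : ℝ ≃ᵐ ℝ where
  toFun x := a * x + b
  invFun y := (y - b) / a
  left_inv x := by field_simp; ring
  right_inv y := by field_simp; ring
  measurable_toFun := (measurable_id.const_mul a).add_const b
  measurable_invFun := (measurable_id.sub_const b).div_const a

private lemma map_volume_affine {a : ℝ} (b : ℝ) (ha : a ≠ 0) :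
    volume.map (fun x : ℝ => a * x + b) = ENNReal.ofReal |a⁻¹| • volume := by
  rw [show (fun x : ℝ => a * x + b) = (· + b) ∘ (a * ·) from rfl,
    ← Measure.map_map (measurable_add_const b) (measurable_const_mul a),
    Real.map_volume_mul_left ha, Measure.map_smul, map_add_right_eq_self volume b]

private lemma map_withDensity_affine {a : ℝ} (b : ℝ) (ha : 0 < a) (g : ℝ → ℝ≥0∞)
    (hg : Measurable g) :
    (volume.withDensity g).map (fun x : ℝ => a * x + b) =
      volume.withDensity (fun y => ENNReal.ofReal a⁻¹ * g ((y - b) / a)) := by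
  have hinv : Measurable fun y : ℝ => g ((y - b) / a) :=
    hg.comp ((measurable_id.sub_const b).div_const a)
  calc (volume.withDensity g).map (fun x : ℝ => a * x + b)
      = (volume.withDensity g).map (affineEquiv a b ha.ne') := rfl
    _ = (volume.map (affineEquiv a b ha.ne')).withDensity
          (fun y => g ((affineEquiv a b ha.ne').symm y)) :=
        map_equiv_withDensity _ g hg volume
    _ = (ENNReal.ofReal a⁻¹ • volume).withDensity (fun y => g ((y - b) / a)) := by
        rw [show ((affineEquiv a b ha.ne' : ℝ → ℝ)) = fun x : ℝ => a * x + b from rfl,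
          map_volume_affine b ha.ne', abs_of_pos (inv_pos.mpr ha)]
        rfl
    _ = volume.withDensity (fun y => ENNReal.ofReal a⁻¹ * g ((y - b) / a)) := by
        rw [withDensity_smul_measure, ← withDensity_smul _ hinv]
        rfl

/-- With `c = c_β/c_α` and `α = 1/(c_α+c_β−1)`, the pushforward of the skew Howe limiting
transition measure `σ^H_{c,α}` under the affine map `x ↦ (x+1)/(1+c)` (rescaling `(−1,c)` to
`(0,1)`) is the Wachter limiting law `σ^{JUE}_{c_α,c_β}` of the Jacobi Unitary Ensemble. -/
theorem sigmaH_map_eq_sigmaJUE (ca cb : ℝ) (hca : 0 < ca) (hcb : 0 < cb)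
    (hsum : 1 < ca + cb) (c α : ℝ) (hc : c = cb / ca) (hα : α = 1 / (ca + cb - 1)) :
    (sigmaH c α).map (fun x => (x + 1) / (1 + c)) = sigmaJUE ca cb := by
  have hs0 : (0:ℝ) < ca + cb - 1 := by linarith
  have hca' : ca ≠ 0 := hca.ne'
  have hs0' : ca + cb - 1 ≠ 0 := hs0.ne'
  have hssum : (0:ℝ) < ca + cb := by linarith
  have hssum' : ca + cb ≠ 0 := hssum.ne'
  have hc0 : 0 < c := by rw [hc]; positivity
  have hα0 : 0 < α := by rw [hα]; positivity
  have ha : (0:ℝ) < 1 + c := by linarith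
  -- sqrt identity
  have hsqrt : Real.sqrt (α * c)
      = Real.sqrt (ca * cb * (ca + cb - 1)) / (ca * (ca + cb - 1)) := by
    rw [show α * c = (Real.sqrt (ca * cb * (ca + cb - 1)) / (ca * (ca + cb - 1)))^2 from ?_,
      Real.sqrt_sq (by positivity)]
    rw [div_pow, Real.sq_sqrt (by positivity), hα, hc]
    field_simp
  -- endpoints
  have hT : tMinus c α = (1 + c) * lamMinus ca cb - 1 := by
    rw [tMinus, lamMinus, hsqrt, hα, hc]
    field_simp
    ring
  have hT' : tPlus c α = (1 + c) * lamPlus ca cb - 1 := by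
    rw [tPlus, lamPlus, hsqrt, hα, hc]
    field_simp
    ring
  -- atom coefficients
  have hA1 : (α * c - 1) / (α * (c + 1)) = 1 - ca := by
    rw [hα, hc]; field_simp; ring
  have hA2 : (α - c) / (α * (c + 1)) = 1 - cb := by
    rw [hα, hc]; field_simp; ring
  -- measurability of density
  set g : ℝ → ℝ≥0∞ := fun x =>
      if x ∈ Set.Ioo (tMinus c α) (tPlus c α) then
        ENNReal.ofReal ((1 + α) / (2 * π * α) *
          Real.sqrt ((x - tMinus c α) * (tPlus c α - x)) / ((c - x) * (x + 1)))
      else 0 with hg_def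
  have hmeas : Measurable g := by
    apply Measurable.ite measurableSet_Ioo _ measurable_const
    apply ENNReal.measurable_ofReal.comp
    exact ((measurable_const.mul
      (((measurable_id.sub_const _).mul (measurable_const.sub measurable_id)).sqrt)).div
      ((measurable_const.sub measurable_id).mul (measurable_id.add_const 1)))
  have hfun : (fun x : ℝ => (x + 1) / (1 + c)) = fun x : ℝ => (1+c)⁻¹ * x + (1+c)⁻¹ := by
    funext x; field_simp
  have hmf : Measurable fun x : ℝ => (1+c)⁻¹ * x + (1+c)⁻¹ :=
    (measurable_id.const_mul _).add_const _
  have hainv : (0:ℝ) < (1+c)⁻¹ := inv_pos.mpr ha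
  rw [hfun, sigmaH, ← hg_def, Measure.map_add _ _ hmf, Measure.map_add _ _ hmf,
    Measure.map_smul, Measure.map_smul, Measure.map_dirac' hmf, Measure.map_dirac' hmf,
    map_withDensity_affine _ hainv _ hmeas]
  have hpt0 : (1+c)⁻¹ * (-1) + (1+c)⁻¹ = 0 := by ring
  have hpt1 : (1+c)⁻¹ * c + (1+c)⁻¹ = 1 := by field_simp; ring
  rw [hpt0, hpt1, sigmaJUE]
  congr 1
  · rw [hA1, hA2]
  · apply congrArg (Measure.withDensity volume)
    funext y
    have harg : (y - (1+c)⁻¹) / (1+c)⁻¹ = (1+c) * y - 1 := by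
      field_simp
    have hiv : ((1+c)⁻¹)⁻¹ = 1 + c := inv_inv _
    rw [harg, hiv]
    simp only [hg_def]
    have hmem : ((1+c) * y - 1 ∈ Set.Ioo (tMinus c α) (tPlus c α)) ↔
        y ∈ Set.Ioo (lamMinus ca cb) (lamPlus ca cb) := by
      simp only [Set.mem_Ioo, hT, hT', sub_lt_sub_iff_right, mul_lt_mul_iff_right₀ ha]
    by_cases hy : y ∈ Set.Ioo (lamMinus ca cb) (lamPlus ca cb)
    · rw [if_pos (hmem.mpr hy), if_pos hy, ← ENNReal.ofReal_mul ha.le]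
      congr 1
      have e1 : (1+c) * y - 1 - tMinus c α = (1+c) * (y - lamMinus ca cb) := by
        rw [hT]; ring
      have e2 : tPlus c α - ((1+c) * y - 1) = (1+c) * (lamPlus ca cb - y) := by
        rw [hT']; ring
      have e3 : c - ((1+c) * y - 1) = (1+c) * (1-y) := by ring
      have e4 : (1+c) * y - 1 + 1 = (1+c) * y := by ring
      rw [e1, e2, e3, e4]
      have hsq : Real.sqrt ((1+c) * (y - lamMinus ca cb) * ((1+c) * (lamPlus ca cb - y)))
          = (1+c) * Real.sqrt ((lamPlus ca cb - y) * (y - lamMinus ca cb)) := by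
        rw [show (1+c) * (y - lamMinus ca cb) * ((1+c) * (lamPlus ca cb - y))
            = (1+c)^2 * ((lamPlus ca cb - y) * (y - lamMinus ca cb)) from by ring,
          Real.sqrt_mul (by positivity), Real.sqrt_sq ha.le]
      rw [hsq]
      have hK : (1 + α) / (2 * π * α) = (ca + cb) / (2 * π) := by
        rw [hα]; field_simp; ring
      rw [hK]
      have h2 : ((1+c):ℝ)^2 ≠ 0 := pow_ne_zero _ ha.ne'
      set S := Real.sqrt ((lamPlus ca cb - y) * (y - lamMinus ca cb))
      calc (1+c) * ((ca + cb) / (2 * π) * ((1+c) * S) / ((1+c) * (1-y) * ((1+c) * y)))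
          = ((1+c)^2 * ((ca + cb) * S / (2 * π))) / ((1+c)^2 * ((1-y) * y)) := by ring
        _ = (ca + cb) * S / (2 * π) / ((1-y) * y) := mul_div_mul_left _ _ h2
        _ = (ca + cb) * S / (2 * π * y * (1-y)) := by rw [div_div]; congr 1; ring
    · rw [if_neg (fun h => hy (hmem.mp h)), if_neg hy, mul_zero]
end

section
/- Normalization of the Jacobi Unitary Ensemble eigenvalue measure (Selberg integral with γ = 1): for every integer N ≥ 1 and all real α, β > −1, ∫_{[0,1]^N} ∏_{i=1}^{N} x_i^{α}(1−x_i)^{β} · ∏_{1≤i<j≤N}(x_i−x_j)² dx_1⋯dx_N = ∏_{j=0}^{N−1} (j+1)! · Γ(α+j+1) · Γ(β+j+1) / Γ(α+β+N+j+1). -/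
open Finset Polynomial
open scoped fwdDiff

private lemma fwdDiff_eval (p : Polynomial ℝ) :
    fwdDiff (1:ℝ) (fun x : ℝ => p.eval x) = fun x : ℝ => (p.comp (X + C 1) - p).eval x := by
  funext x
  simp [fwdDiff, Polynomial.eval_comp]

private lemma iter_fwdDiff_zero (k : ℕ) : (fwdDiff (1:ℝ))^[k] (fun _ : ℝ => (0:ℝ)) = fun _ => 0 := by
  induction k with
  | zero => rfl
  | succ k ih => rw [Function.iterate_succ_apply]; simpa [fwdDiff] using ih

private lemma iter_fwdDiff_poly_zero : ∀ (k : ℕ) (p : Polynomial ℝ), p.natDegree < k →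
    (fwdDiff (1:ℝ))^[k] (fun x : ℝ => p.eval x) = fun _ => 0 := by
  intro k
  induction k with
  | zero => intro p hp; omega
  | succ k ih =>
    intro p hp
    rw [Function.iterate_succ_apply, fwdDiff_eval]
    set q := p.comp (X + C 1) - p with hq
    by_cases hq0 : q = 0
    · rw [hq0]; simpa using iter_fwdDiff_zero k
    by_cases hp0 : p.natDegree = 0
    · exfalso
      obtain ⟨c, rfl⟩ := Polynomial.natDegree_eq_zero.mp hp0
      simp [hq] at hq0
    · apply ih
      have hpne : p ≠ 0 := fun h => hp0 (by simp [h])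
      have hd1 : (X + C (1:ℝ)).natDegree = 1 := Polynomial.natDegree_X_add_C 1
      have hlc : (p.comp (X + C 1)).leadingCoeff = p.leadingCoeff := by
        rw [Polynomial.leadingCoeff_comp (by rw [hd1]; exact one_ne_zero)]
        rw [(Polynomial.monic_X_add_C (1:ℝ)).leadingCoeff, one_pow, mul_one]
      have hcompne : p.comp (X + C 1) ≠ 0 := by
        intro h
        apply hpne
        have := hlc
        rw [h] at this
        simp at this
        exact Polynomial.leadingCoeff_eq_zero.mp this.symm
      have hdeg : (p.comp (X + C 1)).degree = p.degree := by
        rw [Polynomial.degree_eq_natDegree hcompne, Polynomial.degree_eq_natDegree hpne]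
        rw [Polynomial.natDegree_comp, hd1, mul_one]
      have hlt : q.degree < p.degree := by
        have := Polynomial.degree_sub_lt hdeg hcompne hlc
        rwa [← hq, hdeg] at this
      have := Polynomial.natDegree_lt_natDegree hq0 hlt
      omega

private lemma fd_sum (k : ℕ) (p : Polynomial ℝ) (hp : p.natDegree < k) :
    ∑ l ∈ range (k+1), (-1:ℝ)^(k-l) * (k.choose l) * p.eval (l:ℝ) = 0 := by
  have h := fwdDiff_iter_eq_sum_shift (1:ℝ) (fun x : ℝ => p.eval x) k 0
  rw [iter_fwdDiff_poly_zero k p hp] at h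
  have : ∀ l ∈ range (k+1), ((-1:ℤ)^(k-l) * (k.choose l)) • p.eval ((0:ℝ) + l • (1:ℝ))
      = (-1:ℝ)^(k-l) * (k.choose l) * p.eval (l:ℝ) := by
    intro l _
    push_cast [zsmul_eq_mul]
    ring_nf
  rw [Finset.sum_congr rfl this] at h
  simpa using h.symm

open Finset

private lemma prod_shift_pos (k : ℕ) {y : ℝ} (hy : 0 < y) : 0 < ∏ t ∈ range k, (y + t) :=
  Finset.prod_pos fun t _ => by positivity

private lemma S2 : ∀ (k : ℕ) (y : ℝ), 0 < y →
    ∑ l ∈ range (k+1), (-1:ℝ)^(k-l) * (k.choose l) / (y + l)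
      = (-1)^k * k.factorial / ∏ t ∈ range (k+1), (y + t) := by
  intro k
  induction k with
  | zero => intro y hy; simp
  | succ k ih =>
    intro y hy
    rw [Finset.sum_range_succ' _ (k+1)]
    have h1 : ∀ j ∈ range (k+1),
        (-1:ℝ)^(k+1-(j+1)) * ((k+1).choose (j+1)) / (y + (j+1 : ℕ))
        = (-1:ℝ)^(k-j) * (k.choose j) / ((y+1) + j)
          + (-1:ℝ)^(k-j) * (k.choose (j+1)) / (y + (j+1 : ℕ)) := by
      intro j hj
      have : k + 1 - (j+1) = k - j := by omega
      rw [this, Nat.choose_succ_succ]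
      push_cast
      ring
    rw [Finset.sum_congr rfl h1, Finset.sum_add_distrib]
    have h2 : ∑ j ∈ range (k+1), (-1:ℝ)^(k-j) * (k.choose j) / ((y+1) + j)
        = (-1)^k * k.factorial / ∏ t ∈ range (k+1), ((y+1) + t) := ih (y+1) (by linarith)
    have key : ∑ j ∈ range (k+1), (-1:ℝ)^(k-j) * (k.choose (j+1)) / (y + (j+1 : ℕ))
        = - ∑ l ∈ range (k+1), (-1:ℝ)^(k-l) * (k.choose l) / (y + l)
          + (-1:ℝ)^k * (k.choose 0) / (y + (0:ℕ)) := by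
      rw [Finset.sum_range_succ]
      have hlast : (-1:ℝ)^(k-k) * (k.choose (k+1)) / (y + (k+1 : ℕ)) = 0 := by
        rw [Nat.choose_eq_zero_of_lt (by omega)]
        simp
      rw [hlast, add_zero]
      rw [Finset.sum_range_succ' (fun l => (-1:ℝ)^(k-l) * (k.choose l) / (y + l)) k]
      have hg : ∀ j ∈ range k, (-1:ℝ)^(k-j) * (k.choose (j+1)) / (y + (j+1 : ℕ))
          = -((-1:ℝ)^(k-(j+1)) * (k.choose (j+1)) / (y + (j+1 : ℕ))) := by
        intro j hj
        rw [Finset.mem_range] at hj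
        have he : (-1:ℝ)^(k-j) = -(-1:ℝ)^(k-(j+1)) := by
          have : k - (j+1) + 1 = k - j := by omega
          rw [← this, pow_succ]; ring
        rw [he]
        ring
      rw [Finset.sum_congr rfl hg, Finset.sum_neg_distrib]
      simp only [Nat.sub_zero]
      ring
    rw [h2, key, ih y hy]
    have hP' : (0:ℝ) < ∏ t ∈ range (k+1), ((y+1) + t) := prod_shift_pos _ (by linarith)
    have hP : (0:ℝ) < ∏ t ∈ range (k+1), (y + t) := prod_shift_pos _ hy
    have hp1 : y * ∏ t ∈ range (k+1), ((y+1) + (t:ℝ)) = ∏ t ∈ range (k+1+1), (y + t) := by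
      rw [Finset.prod_range_succ' (fun t => y + (t:ℝ)) (k+1), mul_comm]
      congr 1
      · apply Finset.prod_congr rfl
        intro t _
        push_cast
        ring
      · simp
    have hp2 : (∏ t ∈ range (k+1), (y + (t:ℝ))) * (y + (k+1)) = ∏ t ∈ range (k+1+1), (y + t) := by
      rw [Finset.prod_range_succ (fun t => y + (t:ℝ)) (k+1)]
      push_cast
      ring
    have hPP : y * ∏ t ∈ range (k+1), ((y+1) + (t:ℝ))
        = (∏ t ∈ range (k+1), (y + (t:ℝ))) * (y + (k+1)) := hp1.trans hp2.symm
    rw [← hp1]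
    have main : (-1:ℝ)^k * k.factorial / (∏ t ∈ range (k+1), ((y+1) + (t:ℝ)))
        - (-1:ℝ)^k * k.factorial / (∏ t ∈ range (k+1), (y + (t:ℝ)))
        = (-1:ℝ)^(k+1) * ((k+1).factorial)
          / (y * ∏ t ∈ range (k+1), ((y+1) + (t:ℝ))) := by
      rw [div_sub_div _ _ hP'.ne' hP.ne', div_eq_div_iff (by positivity) (by positivity)]
      push_cast [Nat.factorial_succ]
      linear_combination (-((-1:ℝ)^k * (k.factorial:ℝ)) *
        ∏ t ∈ range (k+1), ((y+1) + (t:ℝ))) * hPP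
    simp only [Nat.choose_zero_right, Nat.sub_zero, Nat.cast_one, Nat.cast_zero, add_zero] at *
    push_cast at main ⊢
    linear_combination main
open Finset Polynomial

private lemma Gamma_prod (z : ℝ) (hz : 0 < z) (n : ℕ) :
    Real.Gamma (z + n) = Real.Gamma z * ∏ t ∈ range n, (z + t) := by
  induction n with
  | zero => simp
  | succ n ih =>
    have h1 : z + ((n:ℝ) + 1) = (z + n) + 1 := by ring
    push_cast
    rw [h1, Real.Gamma_add_one (by positivity), Finset.prod_range_succ, ih]
    push_cast
    ring

private lemma natDeg_linprod (c : ℕ → ℝ) (n : ℕ) :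
    (∏ t ∈ range n, (X + C (c t))).natDegree = n := by
  rw [Polynomial.natDegree_prod _ _ (fun t _ => Polynomial.X_add_C_ne_zero _)]
  simp [Polynomial.natDegree_X_add_C]

private lemma monic_linprod (c : ℕ → ℝ) (n : ℕ) :
    (∏ t ∈ range n, (X + C (c t))).Monic :=
  Polynomial.monic_prod_of_monic _ _ (fun t _ => Polynomial.monic_X_add_C _)

private noncomputable def cJ (α β : ℝ) (k l : ℕ) : ℝ :=
  (-1)^(k-l) * (k.choose l) * (∏ t ∈ range l, (α+β+k+1+t)) / ∏ t ∈ range l, (α+1+t)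

private noncomputable def wJ (α β : ℝ) (m : ℕ) : ℝ :=
  Real.Gamma (α+m+1) * Real.Gamma (β+1) / Real.Gamma (α+β+m+2)

section
variable {α β : ℝ} (hα : -1 < α) (hβ : -1 < β)

private lemma cJ_kk (k : ℕ) :
    cJ α β k k = (∏ t ∈ range k, (α+β+k+1+t)) / ∏ t ∈ range k, (α+1+t) := by
  simp [cJ]

include hα hβ in
private lemma cJ_kk_pos (k : ℕ) : 0 < cJ α β k k := by
  rw [cJ_kk]
  apply div_pos
  · apply Finset.prod_pos
    intro t ht
    rw [Finset.mem_range] at ht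
    have h1 : (1:ℝ) ≤ (k:ℝ) := by exact_mod_cast Nat.one_le_iff_ne_zero.2 (by omega)
    have h2 : (0:ℝ) ≤ (t:ℝ) := Nat.cast_nonneg t
    linarith
  · apply Finset.prod_pos
    intro t _
    have h2 : (0:ℝ) ≤ (t:ℝ) := Nat.cast_nonneg t
    linarith

include hα hβ in
private lemma cJ_gamma {k : ℕ} (hk : 1 ≤ k) (l : ℕ) :
    cJ α β k l = (-1)^(k-l) * (k.choose l) * Real.Gamma (α+β+k+l+1) * Real.Gamma (α+1)
      / (Real.Gamma (α+β+k+1) * Real.Gamma (α+l+1)) := by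
  have hk1 : (1:ℝ) ≤ (k:ℝ) := by exact_mod_cast hk
  have hzb : (0:ℝ) < α+β+k+1 := by linarith
  have hza : (0:ℝ) < α+1 := by linarith
  have e1 : Real.Gamma (α+β+k+l+1) = Real.Gamma (α+β+k+1) * ∏ t ∈ range l, ((α+β+k+1) + t) := by
    have := Gamma_prod (α+β+k+1) hzb l
    rw [← this]
    ring_nf
  have e2 : Real.Gamma (α+l+1) = Real.Gamma (α+1) * ∏ t ∈ range l, ((α+1) + t) := by
    have := Gamma_prod (α+1) hza l
    rw [← this]
    ring_nf
  have p1 : (0:ℝ) < ∏ t ∈ range l, ((α+β+k+1) + (t:ℝ)) :=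
    Finset.prod_pos fun t _ => by have : (0:ℝ) ≤ (t:ℝ) := Nat.cast_nonneg t; linarith
  have p2 : (0:ℝ) < ∏ t ∈ range l, ((α+1) + (t:ℝ)) :=
    Finset.prod_pos fun t _ => by have : (0:ℝ) ≤ (t:ℝ) := Nat.cast_nonneg t; linarith
  rw [cJ, e1, e2]
  have g1 : Real.Gamma (α+β+k+1) ≠ 0 := (Real.Gamma_pos_of_pos hzb).ne'
  have g2 : Real.Gamma (α+1) ≠ 0 := (Real.Gamma_pos_of_pos hza).ne'
  have hc1 : ∏ t ∈ range l, (α+β+(k:ℝ)+1+(t:ℝ)) = ∏ t ∈ range l, ((α+β+k+1) + (t:ℝ)) :=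
    Finset.prod_congr rfl fun t _ => by ring
  have hc2 : ∏ t ∈ range l, (α+1+(t:ℝ)) = ∏ t ∈ range l, ((α+1) + (t:ℝ)) :=
    Finset.prod_congr rfl fun t _ => by ring
  rw [hc1, hc2]
  field_simp

include hα hβ in
private lemma AJ_offdiag {m k : ℕ} (hmk : m < k) :
    ∑ l ∈ range (k+1), cJ α β k l * wJ α β (m+l) = 0 := by
  classical
  set P : Polynomial ℝ := (∏ t ∈ range m, (X + C (α+1+t)))
      * (∏ t ∈ range (k-m-1), (X + C (α+β+m+2+t))) with hP
  have hdegP : P.natDegree < k := by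
    rw [hP, Polynomial.natDegree_mul (monic_linprod _ _).ne_zero (monic_linprod _ _).ne_zero,
      natDeg_linprod, natDeg_linprod]
    omega
  set K : ℝ := Real.Gamma (α+1) * Real.Gamma (β+1) / Real.Gamma (α+β+k+1) with hK
  have hterm : ∀ l ∈ range (k+1), cJ α β k l * wJ α β (m+l)
      = K * ((-1:ℝ)^(k-l) * (k.choose l) * P.eval (l:ℝ)) := by
    intro l _
    have hl : (0:ℝ) ≤ (l:ℝ) := Nat.cast_nonneg l
    have hm : (0:ℝ) ≤ (m:ℝ) := Nat.cast_nonneg m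
    have hk1 : (1:ℝ) ≤ (k:ℝ) := by exact_mod_cast Nat.one_le_iff_ne_zero.2 (by omega)
    have hz1 : (0:ℝ) < α+l+1 := by linarith
    have hz2 : (0:ℝ) < α+β+m+l+2 := by linarith
    have hzb : (0:ℝ) < α+β+k+1 := by linarith
    have e1 : Real.Gamma (α+(m+l:ℕ)+1) = Real.Gamma (α+l+1) * ∏ t ∈ range m, ((α+l+1) + t) := by
      have := Gamma_prod (α+l+1) hz1 m
      rw [← this]
      push_cast
      ring_nf
    have e2 : Real.Gamma (α+β+k+l+1)
        = Real.Gamma (α+β+m+l+2) * ∏ t ∈ range (k-m-1), ((α+β+m+l+2) + t) := by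
      have := Gamma_prod (α+β+m+l+2) hz2 (k-m-1)
      rw [← this]
      congr 1
      have hc : ((k-m-1 : ℕ):ℝ) = (k:ℝ) - m - 1 := by
        push_cast [Nat.cast_sub (by omega : 1 ≤ k - m), Nat.cast_sub (by omega : m ≤ k)]
        ring
      rw [hc]
      ring
    have e3 : P.eval (l:ℝ) = (∏ t ∈ range m, ((α+l+1) + t))
        * ∏ t ∈ range (k-m-1), ((α+β+m+l+2) + t) := by
      rw [hP]
      simp only [Polynomial.eval_mul, Polynomial.eval_prod, Polynomial.eval_add,
        Polynomial.eval_X, Polynomial.eval_C]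
      congr 1
      · exact Finset.prod_congr rfl fun t _ => by ring
      · exact Finset.prod_congr rfl fun t _ => by ring
    have e4 : Real.Gamma (α+β+(m+l:ℕ)+2) = Real.Gamma (α+β+m+l+2) := by
      push_cast; ring_nf
    have e5 : Real.Gamma (α+(l:ℕ)+1) ≠ 0 := (Real.Gamma_pos_of_pos hz1).ne'
    have e6 : Real.Gamma (α+β+m+l+2) ≠ 0 := (Real.Gamma_pos_of_pos hz2).ne'
    have e7 : Real.Gamma (α+β+k+1) ≠ 0 := (Real.Gamma_pos_of_pos hzb).ne'
    rw [cJ_gamma hα hβ (by omega) l, wJ, hK, e1, e2, e3, e4]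
    field_simp
  rw [Finset.sum_congr rfl hterm, ← Finset.mul_sum, fd_sum k P hdegP, mul_zero]

include hα hβ in
private lemma AJ_diag (k : ℕ) :
    ∑ l ∈ range (k+1), cJ α β k l * wJ α β (k+l)
      = k.factorial * Real.Gamma (α+1) * Real.Gamma (β+k+1)
        / Real.Gamma (α+β+k+k+2) := by
  classical
  rcases Nat.eq_zero_or_pos k with hk0 | hkpos
  · subst hk0
    simp only [zero_add, Finset.sum_range_one, cJ, wJ]
    norm_num
  have hk1 : (1:ℝ) ≤ (k:ℝ) := by exact_mod_cast hkpos
  set y : ℝ := α+β+(k:ℝ)+1 with hy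
  have hy0 : 0 < y := by rw [hy]; linarith
  set R : Polynomial ℝ := ∏ t ∈ range k, (X + C (α+1+t)) with hR
  set a : ℝ := -(α+β+(k:ℝ)+1) with ha
  set Q : Polynomial ℝ := R /ₘ (X - C a) with hQ
  have hRQ : ∀ x : ℝ, R.eval x = R.eval a + (x - a) * Q.eval x := by
    intro x
    conv_lhs => rw [← Polynomial.modByMonic_add_div R (X - C a)]
    rw [Polynomial.modByMonic_X_sub_C_eq_C_eval]
    simp [hQ]
  set K : ℝ := Real.Gamma (α+1) * Real.Gamma (β+1) / Real.Gamma (α+β+k+1) with hK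
  have hterm : ∀ l ∈ range (k+1), cJ α β k l * wJ α β (k+l)
      = K * ((-1:ℝ)^(k-l) * (k.choose l) * Q.eval (l:ℝ))
        + (K * R.eval a) * ((-1:ℝ)^(k-l) * (k.choose l) / (y + l)) := by
    intro l _
    have hl : (0:ℝ) ≤ (l:ℝ) := Nat.cast_nonneg l
    have hz1 : (0:ℝ) < α+l+1 := by linarith
    have hz2 : (0:ℝ) < α+β+k+l+1 := by linarith
    have hzb : (0:ℝ) < α+β+k+1 := by linarith
    have e1 : Real.Gamma (α+(k+l:ℕ)+1) = Real.Gamma (α+l+1) * ∏ t ∈ range k, ((α+l+1) + t) := by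
      have := Gamma_prod (α+l+1) hz1 k
      rw [← this]
      push_cast
      ring_nf
    have e2 : Real.Gamma (α+β+(k+l:ℕ)+2) = (α+β+k+l+1) * Real.Gamma (α+β+k+l+1) := by
      have h := Real.Gamma_add_one (s := α+β+k+l+1) hz2.ne'
      rw [← h]
      push_cast
      ring_nf
    have e3 : R.eval (l:ℝ) = ∏ t ∈ range k, ((α+l+1) + t) := by
      rw [hR]
      simp only [Polynomial.eval_prod, Polynomial.eval_add, Polynomial.eval_X, Polynomial.eval_C]
      exact Finset.prod_congr rfl fun t _ => by ring
    have e5 : Real.Gamma (α+l+1) ≠ 0 := (Real.Gamma_pos_of_pos hz1).ne'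
    have e6 : Real.Gamma (α+β+k+l+1) ≠ 0 := (Real.Gamma_pos_of_pos hz2).ne'
    have e7 : Real.Gamma (α+β+k+1) ≠ 0 := (Real.Gamma_pos_of_pos hzb).ne'
    have e8 : (α+β+(k:ℝ)+(l:ℝ)+1) ≠ 0 := by positivity
    have e9 : y + (l:ℝ) = α+β+k+l+1 := by rw [hy]; ring
    have e10 : (l:ℝ) - a = α+β+k+l+1 := by rw [ha]; ring
    rw [cJ_gamma hα hβ hkpos l, wJ, hK, e1, e2, ← e3, hRQ (l:ℝ), e9, e10]
    field_simp
    ring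
  rw [Finset.sum_congr rfl hterm, Finset.sum_add_distrib, ← Finset.mul_sum, ← Finset.mul_sum]
  have hQsum : ∑ l ∈ range (k+1), (-1:ℝ)^(k-l) * (k.choose l) * Q.eval (l:ℝ) = 0 := by
    apply fd_sum
    rw [hQ, Polynomial.natDegree_divByMonic R (Polynomial.monic_X_sub_C a)]
    rw [hR, natDeg_linprod]
    simp only [Polynomial.natDegree_X_sub_C]
    omega
  rw [hQsum, mul_zero, zero_add, S2 k y hy0]
  have hRa : R.eval a = (-1:ℝ)^k * ∏ s ∈ range k, (β+1+s) := by
    rw [hR]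
    simp only [Polynomial.eval_prod, Polynomial.eval_add, Polynomial.eval_X, Polynomial.eval_C]
    have hc : ∀ t ∈ range k, a + (α+1+(t:ℝ)) = -1 * (β+1+((k-1-t : ℕ):ℝ)) := by
      intro t ht
      rw [Finset.mem_range] at ht
      have : ((k-1-t : ℕ):ℝ) = (k:ℝ) - 1 - t := by
        push_cast [Nat.cast_sub (by omega : t ≤ k - 1), Nat.cast_sub (by omega : 1 ≤ k)]
        ring
      rw [this, ha]
      ring
    rw [Finset.prod_congr rfl hc, Finset.prod_mul_distrib, Finset.prod_const,
      Finset.card_range]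
    congr 1
    exact Finset.prod_range_reflect (fun s => β+1+(s:ℝ)) k
  have hGb : Real.Gamma (β+1) * ∏ s ∈ range k, (β+1+s) = Real.Gamma (β+k+1) := by
    have := Gamma_prod (β+1) (by linarith) k
    rw [← this]
    congr 1
    ring
  have hGy : (∏ t ∈ range (k+1), (y + t)) * Real.Gamma (α+β+k+1)
      = Real.Gamma (α+β+k+k+2) := by
    have := Gamma_prod y hy0 (k+1)
    rw [hy] at this ⊢
    rw [mul_comm, ← this]
    congr 1
    push_cast
    ring
  rw [hRa]
  have hzb : (0:ℝ) < α+β+k+1 := by linarith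
  have h2 : (0:ℝ) < α+β+k+k+2 := by linarith
  have hGy0 : Real.Gamma (α+β+k+1) ≠ 0 := (Real.Gamma_pos_of_pos hzb).ne'
  have hG2 : Real.Gamma (α+β+k+k+2) ≠ 0 := (Real.Gamma_pos_of_pos h2).ne'
  have hGb0 : Real.Gamma (β+1) ≠ 0 := (Real.Gamma_pos_of_pos (by linarith : (0:ℝ) < β+1)).ne'
  have hprody : (∏ t ∈ range (k+1), (y + (t:ℝ))) ≠ 0 := by
    apply ne_of_gt
    apply Finset.prod_pos
    intro t _
    have : (0:ℝ) ≤ (t:ℝ) := Nat.cast_nonneg t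
    linarith
  rw [hK, ← hGy, ← hGb]
  have hsq : (-1:ℝ)^k * (-1:ℝ)^k = 1 := by rw [← mul_pow]; norm_num
  field_simp
  linear_combination (Real.Gamma (α+1) * ∏ s ∈ range k, (β+1+(s:ℝ))) * hsq
end

open MeasureTheory Real Set

private lemma betaAux (p q : ℝ) :
    Set.EqOn (fun t : ℝ => ((t ^ (p-1) * (1-t) ^ (q-1) : ℝ) : ℂ))
      (fun t : ℝ => (t:ℂ) ^ ((p:ℂ)-1) * ((1:ℂ)-t) ^ ((q:ℂ)-1)) (Set.Ioc 0 1) := by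
  intro t ht
  obtain ⟨ht0, ht1⟩ := ht
  have h1 : (0:ℝ) ≤ t := le_of_lt ht0
  have h2 : (0:ℝ) ≤ 1 - t := by linarith
  simp only
  rw [Complex.ofReal_mul, Complex.ofReal_cpow h1, Complex.ofReal_cpow h2]
  push_cast
  norm_num

private lemma betaIntegrable {p q : ℝ} (hp : 0 < p) (hq : 0 < q) :
    IntegrableOn (fun t : ℝ => t ^ (p-1) * (1-t) ^ (q-1)) (Set.Icc 0 1) volume := by
  have h := Complex.betaIntegral_convergent (u := p) (v := q) (by simpa) (by simpa)
  rw [intervalIntegrable_iff_integrableOn_Ioc_of_le zero_le_one] at h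
  have h2 : IntegrableOn (fun t : ℝ => ((t ^ (p-1) * (1-t) ^ (q-1) : ℝ) : ℂ)) (Set.Ioc 0 1)
      volume := by
    apply h.congr_fun _ measurableSet_Ioc
    intro t ht
    exact ((betaAux p q) ht).symm
  have h4 : IntegrableOn (fun t : ℝ => Complex.re ((t ^ (p-1) * (1-t) ^ (q-1) : ℝ) : ℂ))
      (Set.Ioc 0 1) volume := h2.re
  have h3 : IntegrableOn (fun t : ℝ => t ^ (p-1) * (1-t) ^ (q-1)) (Set.Ioc 0 1) volume := by
    apply h4.congr_fun _ measurableSet_Ioc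
    intro t _
    simp
  rwa [integrableOn_Icc_iff_integrableOn_Ioc]

private lemma betaEval {p q : ℝ} (hp : 0 < p) (hq : 0 < q) :
    ∫ t in Set.Icc (0:ℝ) 1, t ^ (p-1) * (1-t) ^ (q-1)
      = Real.Gamma p * Real.Gamma q / Real.Gamma (p+q) := by
  have hcb : Complex.Gamma p * Complex.Gamma q
      = Complex.Gamma (p+q) * Complex.betaIntegral p q :=
    Complex.Gamma_mul_Gamma_eq_betaIntegral (by simpa) (by simpa)
  have hbi : Complex.betaIntegral p q
      = ((∫ t in Set.Icc (0:ℝ) 1, t ^ (p-1) * (1-t) ^ (q-1) : ℝ) : ℂ) := by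
    rw [Complex.betaIntegral, intervalIntegral.integral_of_le zero_le_one]
    rw [← setIntegral_congr_fun measurableSet_Ioc (betaAux p q)]
    rw [show (fun t : ℝ => ((t ^ (p-1) * (1-t) ^ (q-1) : ℝ) : ℂ))
        = (fun t : ℝ => ((t ^ (p-1) * (1-t) ^ (q-1) : ℝ) : ℂ)) from rfl,
      show ∫ (x : ℝ) in Set.Ioc (0:ℝ) 1, ((x ^ (p-1) * (1-x) ^ (q-1) : ℝ) : ℂ) ∂volume
        = ((∫ (x : ℝ) in Set.Ioc (0:ℝ) 1, (x ^ (p-1) * (1-x) ^ (q-1)) ∂volume : ℝ) : ℂ) from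
        _root_.integral_ofReal (𝕜 := ℂ)]
    rw [MeasureTheory.integral_Icc_eq_integral_Ioc]
  rw [hbi] at hcb
  have hgpq : (0:ℝ) < p + q := by linarith
  have : ((Real.Gamma p * Real.Gamma q : ℝ) : ℂ)
      = ((Real.Gamma (p+q) * ∫ t in Set.Icc (0:ℝ) 1, t ^ (p-1) * (1-t) ^ (q-1) : ℝ) : ℂ) := by
    push_cast
    rw [← Complex.Gamma_ofReal, ← Complex.Gamma_ofReal, ← Complex.Gamma_ofReal]
    push_cast
    exact hcb
  have h2 := Complex.ofReal_injective this
  rw [eq_div_iff (Real.Gamma_pos_of_pos hgpq).ne']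
  rw [h2]
  ring
open MeasureTheory Real Set Finset Polynomial

section
variable {α β : ℝ} (hα : -1 < α) (hβ : -1 < β)

include hα hβ in
private lemma mom_eqOn (m : ℕ) :
    Set.EqOn (fun t : ℝ => t^α * (1-t)^β * t^m)
      (fun t : ℝ => t^((α+m+1)-1) * (1-t)^((β+1)-1)) (Set.Ioc 0 1) := by
  intro t ht
  obtain ⟨ht0, ht1⟩ := ht
  simp only
  have h1 : (α + m + 1) - 1 = α + m := by ring
  have h2 : (β + 1) - 1 = β := by ring
  rw [h1, h2, Real.rpow_add ht0, Real.rpow_natCast]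
  ring

include hα hβ in
private lemma momInt (m : ℕ) :
    IntegrableOn (fun t : ℝ => t^α * (1-t)^β * t^m) (Set.Icc 0 1) volume := by
  have hm : (0:ℝ) ≤ (m:ℝ) := Nat.cast_nonneg m
  have h := betaIntegrable (p := α+m+1) (q := β+1) (by linarith) (by linarith)
  rw [integrableOn_Icc_iff_integrableOn_Ioc] at h ⊢
  exact h.congr_fun (fun t ht => ((mom_eqOn hα hβ m) ht).symm) measurableSet_Ioc

include hα hβ in
private lemma momEval (m : ℕ) :
    ∫ t in Set.Icc (0:ℝ) 1, t^α * (1-t)^β * t^m = wJ α β m := by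
  have hm : (0:ℝ) ≤ (m:ℝ) := Nat.cast_nonneg m
  rw [MeasureTheory.integral_Icc_eq_integral_Ioc,
    setIntegral_congr_fun measurableSet_Ioc (mom_eqOn hα hβ m),
    ← MeasureTheory.integral_Icc_eq_integral_Ioc,
    betaEval (p := α+m+1) (q := β+1) (by linarith) (by linarith), wJ]
  have : α + m + 1 + (β + 1) = α + β + m + 2 := by ring
  rw [this]

end

private noncomputable def PJ (α β : ℝ) (k : ℕ) : Polynomial ℝ :=
  ∑ l ∈ range (k+1), Polynomial.C (cJ α β k l) * X^l

private noncomputable def QJ (α β : ℝ) (k : ℕ) : Polynomial ℝ :=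
  Polynomial.C (cJ α β k k)⁻¹ * PJ α β k

section
variable {α β : ℝ} (hα : -1 < α) (hβ : -1 < β)

private lemma PJ_coeff (k j : ℕ) :
    (PJ α β k).coeff j = if j ≤ k then cJ α β k j else 0 := by
  rw [PJ, Polynomial.finset_sum_coeff]
  simp only [Polynomial.coeff_C_mul, Polynomial.coeff_X_pow, mul_ite, mul_one, mul_zero]
  rw [Finset.sum_ite_eq (range (k+1)) j (fun l => cJ α β k l)]
  simp [Nat.lt_succ_iff]

include hα hβ in
private lemma PJ_natDegree (k : ℕ) : (PJ α β k).natDegree = k := by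
  apply le_antisymm
  · apply Polynomial.natDegree_sum_le_of_forall_le
    intro l hl
    rw [Finset.mem_range] at hl
    refine le_trans (Polynomial.natDegree_C_mul_le _ _) ?_
    rw [Polynomial.natDegree_X_pow]
    omega
  · apply Polynomial.le_natDegree_of_ne_zero
    rw [PJ_coeff]
    simp only [le_refl, if_true]
    exact (cJ_kk_pos hα hβ k).ne'

include hα hβ in
private lemma QJ_natDegree (k : ℕ) : (QJ α β k).natDegree = k := by
  rw [QJ, Polynomial.natDegree_C_mul (ne_of_gt (inv_pos.2 (cJ_kk_pos hα hβ k))),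
    PJ_natDegree hα hβ]

include hα hβ in
private lemma QJ_monic (k : ℕ) : (QJ α β k).Monic := by
  unfold Polynomial.Monic
  rw [Polynomial.leadingCoeff, QJ_natDegree hα hβ, QJ, Polynomial.coeff_C_mul, PJ_coeff]
  simp only [le_refl, if_true]
  exact inv_mul_cancel₀ (cJ_kk_pos hα hβ k).ne'

private lemma QJ_eval (k : ℕ) (t : ℝ) :
    (QJ α β k).eval t = (cJ α β k k)⁻¹ * ∑ l ∈ range (k+1), cJ α β k l * t^l := by
  rw [QJ, PJ]
  simp [Polynomial.eval_finset_sum]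

include hα hβ in
private lemma QJ_fun_eq (m k : ℕ) :
    (fun t : ℝ => t^α * (1-t)^β * t^m * (QJ α β k).eval t)
      = fun t : ℝ => ∑ l ∈ range (k+1), ((cJ α β k k)⁻¹ * cJ α β k l)
          * (t^α * (1-t)^β * t^(m+l)) := by
  funext t
  rw [QJ_eval, Finset.mul_sum, Finset.mul_sum]
  apply Finset.sum_congr rfl
  intro l _
  rw [pow_add]
  ring

include hα hβ in
private lemma QJ_momInt (m k : ℕ) :
    IntegrableOn (fun t : ℝ => t^α * (1-t)^β * t^m * (QJ α β k).eval t) (Set.Icc 0 1) volume := by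
  rw [QJ_fun_eq hα hβ]
  apply MeasureTheory.integrable_finset_sum
  intro l _
  exact (momInt hα hβ (m+l)).const_mul _

include hα hβ in
private lemma QJ_momEval (m k : ℕ) :
    ∫ t in Set.Icc (0:ℝ) 1, t^α * (1-t)^β * t^m * (QJ α β k).eval t
      = (cJ α β k k)⁻¹ * ∑ l ∈ range (k+1), cJ α β k l * wJ α β (m+l) := by
  rw [QJ_fun_eq hα hβ]
  rw [MeasureTheory.integral_finset_sum _ (fun l _ => (momInt hα hβ (m+l)).const_mul _)]
  rw [Finset.mul_sum]
  apply Finset.sum_congr rfl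
  intro l _
  rw [MeasureTheory.integral_const_mul, momEval hα hβ (m+l), mul_assoc]

end
open Finset

section
variable {α β : ℝ} (hα : -1 < α) (hβ : -1 < β)

include hα hβ in
private lemma dagger (N : ℕ) :
    ∏ k ∈ range N, (Real.Gamma (α+β+k+k+2) * ∏ t ∈ range k, (α+β+k+1+t))
      = ∏ j ∈ range N, Real.Gamma (α+β+N+j+1) := by
  induction N with
  | zero => simp
  | succ N ih =>
    rw [Finset.prod_range_succ, ih]
    have hstep : ∏ j ∈ range (N+1), Real.Gamma (α+β+(N+1:ℕ)+j+1)
        = (∏ j ∈ range N, Real.Gamma (α+β+N+j+1)) * (∏ t ∈ range N, (α+β+N+1+t))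
          * Real.Gamma (α+β+N+N+2) := by
      rw [Finset.prod_range_succ]
      have hlast : Real.Gamma (α+β+((N+1:ℕ):ℝ)+N+1) = Real.Gamma (α+β+N+N+2) := by
        push_cast; ring_nf
      rw [hlast]
      congr 1
      have hj : ∀ j ∈ range N, Real.Gamma (α+β+((N+1:ℕ):ℝ)+j+1)
          = (α+β+(N:ℝ)+j+1) * Real.Gamma (α+β+N+j+1) := by
        intro j hj
        rw [Finset.mem_range] at hj
        have hN1 : (1:ℝ) ≤ (N:ℝ) := by exact_mod_cast Nat.one_le_iff_ne_zero.2 (by omega)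
        have hjr : (0:ℝ) ≤ (j:ℝ) := Nat.cast_nonneg j
        have hpos : (0:ℝ) < α+β+N+j+1 := by linarith
        have := Real.Gamma_add_one hpos.ne'
        have harg : α+β+((N+1:ℕ):ℝ)+j+1 = (α+β+N+j+1) + 1 := by push_cast; ring
        rw [harg, this]
      rw [Finset.prod_congr rfl hj, Finset.prod_mul_distrib]
      rw [mul_comm]
      congr 1
      exact Finset.prod_congr rfl fun t _ => by ring
    rw [hstep]
    ring

include hα hβ in
private lemma final_prod (N : ℕ) :
    (N.factorial : ℝ) * ∏ k ∈ range N, ((cJ α β k k)⁻¹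
        * ((k.factorial : ℝ) * Real.Gamma (α+1) * Real.Gamma (β+k+1) / Real.Gamma (α+β+k+k+2)))
      = ∏ j ∈ range N, ((j+1).factorial * Real.Gamma (α+j+1) * Real.Gamma (β+j+1)
          / Real.Gamma (α+β+N+j+1) : ℝ) := by
  have hterm : ∀ k ∈ range N, (cJ α β k k)⁻¹
        * ((k.factorial : ℝ) * Real.Gamma (α+1) * Real.Gamma (β+k+1) / Real.Gamma (α+β+k+k+2))
      = ((k.factorial : ℝ) * Real.Gamma (α+k+1) * Real.Gamma (β+k+1))
        / (Real.Gamma (α+β+k+k+2) * ∏ t ∈ range k, (α+β+k+1+t)) := by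
    intro k _
    have hka : (0:ℝ) ≤ (k:ℝ) := Nat.cast_nonneg k
    have pa : (0:ℝ) < ∏ t ∈ range k, (α+1+(t:ℝ)) :=
      Finset.prod_pos fun t _ => by have : (0:ℝ) ≤ (t:ℝ) := Nat.cast_nonneg t; linarith
    have pb : (0:ℝ) < ∏ t ∈ range k, (α+β+(k:ℝ)+1+(t:ℝ)) := by
      apply Finset.prod_pos
      intro t ht
      rw [Finset.mem_range] at ht
      have h1 : (1:ℝ) ≤ (k:ℝ) := by exact_mod_cast Nat.one_le_iff_ne_zero.2 (by omega)
      have : (0:ℝ) ≤ (t:ℝ) := Nat.cast_nonneg t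
      linarith
    have hGa : Real.Gamma (α+k+1) = Real.Gamma (α+1) * ∏ t ∈ range k, (α+1+(t:ℝ)) := by
      have := Gamma_prod (α+1) (by linarith) k
      rw [← this]
      congr 1
      ring
    have hG2 : Real.Gamma (α+β+k+k+2) ≠ 0 := by
      apply (Real.Gamma_pos_of_pos _).ne'
      linarith
    rw [cJ_kk, hGa]
    rw [inv_div]
    field_simp
  rw [Finset.prod_congr rfl hterm, Finset.prod_div_distrib, dagger hα hβ N,
    Finset.prod_div_distrib, ← mul_div_assoc]
  congr 1
  have e1 : ∏ j ∈ range N, (((j+1).factorial : ℝ) * Real.Gamma (α+j+1) * Real.Gamma (β+j+1))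
      = (∏ j ∈ range N, ((j+1).factorial : ℝ))
        * ∏ j ∈ range N, (Real.Gamma (α+j+1) * Real.Gamma (β+j+1)) := by
    rw [← Finset.prod_mul_distrib]
    exact Finset.prod_congr rfl fun j _ => by ring
  have e2 : ∏ k ∈ range N, ((k.factorial : ℝ) * Real.Gamma (α+k+1) * Real.Gamma (β+k+1))
      = (∏ k ∈ range N, (k.factorial : ℝ))
        * ∏ k ∈ range N, (Real.Gamma (α+k+1) * Real.Gamma (β+k+1)) := by
    rw [← Finset.prod_mul_distrib]
    exact Finset.prod_congr rfl fun j _ => by ring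
  have e3 : ∏ j ∈ range N, (((j+1).factorial : ℝ))
      = ∏ j ∈ range N, (((j:ℝ)+1) * (j.factorial : ℝ)) := by
    apply Finset.prod_congr rfl
    intro j _
    push_cast [Nat.factorial_succ]
    ring
  have e4 : (∏ j ∈ range N, (((j+1).factorial : ℝ)))
      = (N.factorial:ℝ) * ∏ j ∈ range N, (j.factorial:ℝ) := by
    rw [e3, Finset.prod_mul_distrib]
    congr 1
    exact_mod_cast Finset.prod_range_add_one_eq_factorial N
  rw [e1, e2, e4]
  ring
end
open MeasureTheory Real

set_option maxHeartbeats 2000000 in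
/-- Normalization of the JUE eigenvalue measure (Selberg integral with `γ = 1`):
`∫_{[0,1]^N} ∏_i x_i^α (1−x_i)^β ∏_{i<j} (x_i−x_j)² dx
  = ∏_{j=0}^{N−1} (j+1)!·Γ(α+j+1)·Γ(β+j+1)/Γ(α+β+N+j+1)`. -/
theorem selberg_gamma_one (N : ℕ) (hN : 1 ≤ N) (α β : ℝ) (hα : -1 < α) (hβ : -1 < β) :
    ∫ x in Set.univ.pi (fun _ : Fin N => Set.Icc (0 : ℝ) 1),
        ((∏ i, (x i) ^ α * (1 - x i) ^ β) *
          ∏ ij ∈ (Finset.univ : Finset (Fin N × Fin N)).filter (fun ij => ij.1 < ij.2),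
            (x ij.1 - x ij.2) ^ 2) =
      ∏ j ∈ Finset.range N,
        ((j + 1).factorial : ℝ) * Real.Gamma (α + j + 1) * Real.Gamma (β + j + 1) /
          Real.Gamma (α + β + N + j + 1) := by
  classical
  set S := Set.univ.pi (fun _ : Fin N => Set.Icc (0 : ℝ) 1) with hSdef
  have hS : MeasurableSet S := MeasurableSet.univ_pi (fun _ => measurableSet_Icc)
  set F : (Fin N → ℝ) → ℝ := fun x =>
    ((∏ i, (x i) ^ α * (1 - x i) ^ β) *
      ∏ ij ∈ (Finset.univ : Finset (Fin N × Fin N)).filter (fun ij => ij.1 < ij.2),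
        (x ij.1 - x ij.2) ^ 2) with hF
  set ε : Equiv.Perm (Fin N) → ℝ := fun σ => ((Equiv.Perm.sign σ : ℤ) : ℝ) with hε
  set h : Equiv.Perm (Fin N) → Equiv.Perm (Fin N) → Fin N → ℝ → ℝ := fun σ τ i t =>
    t ^ α * (1 - t) ^ β * t ^ ((σ i : Fin N) : ℕ) * (QJ α β ((τ i : Fin N) : ℕ)).eval t with hh
  have hfil : ∀ x : Fin N → ℝ,
      (∏ ij ∈ (Finset.univ : Finset (Fin N × Fin N)).filter (fun ij => ij.1 < ij.2),
        (x ij.1 - x ij.2)^2) = ∏ i, ∏ j ∈ Finset.Ioi i, (x i - x j)^2 := by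
    intro x
    rw [Finset.prod_filter, Fintype.prod_prod_type'
      (f := fun a b : Fin N => if a < b then (x a - x b)^2 else 1)]
    apply Finset.prod_congr rfl
    intro i _
    have hioi : Finset.Ioi i = Finset.univ.filter (fun j => i < j) := by
      ext j; simp
    rw [hioi, Finset.prod_filter]
  have hsq : ∀ x : Fin N → ℝ, (∏ i, ∏ j ∈ Finset.Ioi i, (x i - x j)^2)
      = (∏ i, ∏ j ∈ Finset.Ioi i, (x j - x i))^2 := by
    intro x
    rw [← Finset.prod_pow]
    apply Finset.prod_congr rfl
    intro i _
    rw [← Finset.prod_pow]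
    exact Finset.prod_congr rfl fun j _ => by ring
  have hQdet : ∀ x : Fin N → ℝ, (Matrix.vandermonde x).det
      = (Matrix.of fun i j : Fin N => (QJ α β (j:ℕ)).eval (x i)).det :=
    fun x => Matrix.det_eval_matrixOfPolynomials_eq_det_vandermonde x
      (fun j => QJ α β (j:ℕ)) (fun j => QJ_natDegree hα hβ (j:ℕ))
      (fun j => QJ_monic hα hβ (j:ℕ))
  have hV : ∀ x : Fin N → ℝ, (Matrix.vandermonde x).det
      = ∑ σ : Equiv.Perm (Fin N), ε σ * ∏ i, (x i) ^ ((σ i : Fin N) : ℕ) := by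
    intro x
    rw [← Matrix.det_transpose, Matrix.det_apply']
    rfl
  have hQ : ∀ x : Fin N → ℝ, (Matrix.of fun i j : Fin N => (QJ α β (j:ℕ)).eval (x i)).det
      = ∑ τ : Equiv.Perm (Fin N), ε τ * ∏ i, (QJ α β ((τ i : Fin N):ℕ)).eval (x i) := by
    intro x
    rw [← Matrix.det_transpose, Matrix.det_apply']
    rfl
  have hFx : ∀ x : Fin N → ℝ, F x
      = ∑ p : Equiv.Perm (Fin N) × Equiv.Perm (Fin N),
          (ε p.1 * ε p.2) * ∏ i, h p.1 p.2 i (x i) := by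
    intro x
    have hsplit : ∑ p : Equiv.Perm (Fin N) × Equiv.Perm (Fin N),
          (ε p.1 * ε p.2) * ∏ i, h p.1 p.2 i (x i)
        = ∑ σ : Equiv.Perm (Fin N), ∑ τ : Equiv.Perm (Fin N),
          (ε σ * ε τ) * ∏ i, h σ τ i (x i) := by
      rw [← Finset.univ_product_univ, Finset.sum_product]
    rw [hsplit, hF]
    simp only
    rw [hfil x, hsq x, ← Matrix.det_vandermonde x, sq]
    nth_rewrite 2 [hQdet x]
    rw [hV x, hQ x, Finset.sum_mul_sum, Finset.mul_sum]
    apply Finset.sum_congr rfl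
    intro σ _
    rw [Finset.mul_sum]
    apply Finset.sum_congr rfl
    intro τ _
    have hprod : ∏ i, h σ τ i (x i)
        = ((∏ i, (x i) ^ α * (1 - x i) ^ β) * ∏ i, (x i) ^ ((σ i : Fin N):ℕ))
          * ∏ i, (QJ α β ((τ i : Fin N):ℕ)).eval (x i) := by
      rw [← Finset.prod_mul_distrib, ← Finset.prod_mul_distrib]
    rw [hprod]
    ring
  have hind : ∀ x : Fin N → ℝ, S.indicator F x
      = ∑ p : Equiv.Perm (Fin N) × Equiv.Perm (Fin N),
          (ε p.1 * ε p.2) * ∏ i, (Set.Icc (0:ℝ) 1).indicator (h p.1 p.2 i) (x i) := by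
    intro x
    by_cases hx : x ∈ S
    · rw [Set.indicator_of_mem hx, hFx x]
      apply Finset.sum_congr rfl
      intro p _
      congr 1
      apply Finset.prod_congr rfl
      intro i _
      have : x i ∈ Set.Icc (0:ℝ) 1 := hx i (Set.mem_univ i)
      rw [Set.indicator_of_mem this]
    · rw [Set.indicator_of_notMem hx]
      symm
      apply Finset.sum_eq_zero
      intro p _
      have : ∃ i, x i ∉ Set.Icc (0:ℝ) 1 := by
        by_contra hcon
        push_neg at hcon
        exact hx (fun i _ => hcon i)
      obtain ⟨i, hi⟩ := this
      rw [Finset.prod_eq_zero (Finset.mem_univ i) (Set.indicator_of_notMem hi _), mul_zero]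
  -- integrability of each factor
  have hIntf : ∀ (σ τ : Equiv.Perm (Fin N)) (i : Fin N),
      Integrable ((Set.Icc (0:ℝ) 1).indicator (h σ τ i)) volume :=
    fun σ τ i => (integrable_indicator_iff measurableSet_Icc).2
      (QJ_momInt hα hβ ((σ i : Fin N):ℕ) ((τ i : Fin N):ℕ))
  -- the moment matrix
  set Mmat : Matrix (Fin N) (Fin N) ℝ := Matrix.of fun m k : Fin N =>
    (cJ α β (k:ℕ) (k:ℕ))⁻¹ * ∑ l ∈ Finset.range ((k:ℕ)+1), cJ α β (k:ℕ) l * wJ α β ((m:ℕ)+l)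
    with hM
  have hMeval : ∀ (σ τ : Equiv.Perm (Fin N)) (i : Fin N),
      ∫ t, (Set.Icc (0:ℝ) 1).indicator (h σ τ i) t = Mmat (σ i) (τ i) := by
    intro σ τ i
    rw [integral_indicator measurableSet_Icc]
    rw [hh]
    simp only
    rw [QJ_momEval hα hβ ((σ i : Fin N):ℕ) ((τ i : Fin N):ℕ)]
    rfl
  -- main integral computation
  have step1 : ∫ x in S, F x
      = ∑ p : Equiv.Perm (Fin N) × Equiv.Perm (Fin N),
          (ε p.1 * ε p.2) * ∏ i, Mmat (p.1 i) (p.2 i) := by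
    rw [← integral_indicator hS]
    rw [show S.indicator F = fun x => ∑ p : Equiv.Perm (Fin N) × Equiv.Perm (Fin N),
        (ε p.1 * ε p.2) * ∏ i, (Set.Icc (0:ℝ) 1).indicator (h p.1 p.2 i) (x i)
      from funext hind]
    rw [MeasureTheory.integral_finset_sum _ (fun p _ =>
      (Integrable.fintype_prod (𝕜 := ℝ) (f := fun i => (Set.Icc (0:ℝ) 1).indicator
        (h p.1 p.2 i)) (fun i => hIntf p.1 p.2 i)).const_mul _)]
    apply Finset.sum_congr rfl
    intro p _
    rw [MeasureTheory.integral_const_mul]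
    congr 1
    rw [MeasureTheory.integral_fintype_prod_volume_eq_prod (ι := Fin N)
      (f := fun i => (Set.Icc (0:ℝ) 1).indicator (h p.1 p.2 i))]
    exact Finset.prod_congr rfl fun i _ => hMeval p.1 p.2 i
  -- combinatorial reduction
  set D : ℝ := ∑ ρ : Equiv.Perm (Fin N), ε ρ * ∏ j, Mmat (ρ j) j with hD
  have hsgn2 : ∀ τ : Equiv.Perm (Fin N), ε τ * ε τ = 1 := by
    intro τ
    rw [hε]
    simp only
    rw [← Int.cast_mul, ← Units.val_mul, Int.units_mul_self]
    norm_num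
  have step2 : ∑ p : Equiv.Perm (Fin N) × Equiv.Perm (Fin N),
        (ε p.1 * ε p.2) * ∏ i, Mmat (p.1 i) (p.2 i)
      = (N.factorial : ℝ) * D := by
    rw [← Finset.univ_product_univ, Finset.sum_product, Finset.sum_comm]
    have inner : ∀ τ : Equiv.Perm (Fin N),
        ∑ σ : Equiv.Perm (Fin N), (ε σ * ε τ) * ∏ i, Mmat (σ i) (τ i) = D := by
      intro τ
      have hre := Equiv.sum_comp (Equiv.mulRight τ)
        (fun σ => (ε σ * ε τ) * ∏ i, Mmat (σ i) (τ i))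
      rw [← hre]
      rw [hD]
      apply Finset.sum_congr rfl
      intro ρ _
      have hsg : ε (Equiv.mulRight τ ρ) = ε ρ * ε τ := by
        show ((Equiv.Perm.sign (ρ * τ) : ℤ) : ℝ)
          = ((Equiv.Perm.sign ρ : ℤ) : ℝ) * ((Equiv.Perm.sign τ : ℤ) : ℝ)
        rw [map_mul, Units.val_mul, Int.cast_mul]
      have hpr : ∏ i, Mmat ((Equiv.mulRight τ ρ) i) (τ i) = ∏ j, Mmat (ρ j) j := by
        have := Equiv.prod_comp τ (fun j => Mmat (ρ j) j)
        rw [← this]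
        apply Finset.prod_congr rfl
        intro i _
        rfl
      rw [hsg, hpr, mul_assoc (ε ρ), hsgn2 τ, mul_one]
    rw [Finset.sum_congr rfl (fun τ _ => inner τ)]
    rw [Finset.sum_const, Finset.card_univ, Fintype.card_perm, Fintype.card_fin,
      nsmul_eq_mul]
  -- triangularity
  have htri : D = ∏ k : Fin N, Mmat k k := by
    have hDdet : D = Mmat.det := (Matrix.det_apply' Mmat).symm
    rw [hDdet]
    apply Matrix.det_of_lowerTriangular
    intro i j hij
    have hij' : (i : Fin N) < j := hij
    have : ((i:ℕ)) < ((j:ℕ)) := hij'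
    rw [hM]
    simp only [Matrix.of_apply]
    rw [AJ_offdiag hα hβ this, mul_zero]
  -- final evaluation
  rw [step1, step2, htri]
  have hdiag : ∀ k : Fin N, Mmat k k
      = (cJ α β (k:ℕ) (k:ℕ))⁻¹ * (((k:ℕ).factorial : ℝ) * Real.Gamma (α+1)
          * Real.Gamma (β+(k:ℕ)+1) / Real.Gamma (α+β+(k:ℕ)+(k:ℕ)+2)) := by
    intro k
    rw [hM]
    simp only [Matrix.of_apply]
    rw [AJ_diag hα hβ (k:ℕ)]
  rw [Finset.prod_congr rfl (fun k _ => hdiag k)]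
  rw [Fin.prod_univ_eq_prod_range (fun k => (cJ α β k k)⁻¹ * ((k.factorial : ℝ)
    * Real.Gamma (α+1) * Real.Gamma (β+k+1) / Real.Gamma (α+β+k+k+2))) N]
  exact final_prod hα hβ N
end
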